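/- Let α ∈ ℝ be irrational and positive, let β = α/(1+α), and let θ : ℝ/ℤ → ℝ/ℤ be the rotation x ↦ x + β. If f : ℝ/ℤ → ℤ is a function of the form f = Σ_n n·χ_{I_n} with each I_n a finite disjoint union of half-open arcs [lβ, mβ) mod 1 (l, m ∈ ℤ), and f is invariant under θ (f ∘ θ = f), then f is constant. -/

import Mathlib

/-!
Every nonempty level set of `f` contains the left endpoint `lβ` of one of its arcs, and `lβ`
lies on the `θ`-orbit of `0`, on which the invariant function `f` is constant. Hence every
value of `f` equals `f 0`.
-/

open Set

theorem exists_intCast_mul_mem_biUnion_image_Ico {X : Type*} (π : ℝ → X) (β : ℝ)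
    {S : Set (ℤ × ℤ)} (hne : (⋃ p ∈ S, π '' Ico ((p.1 : ℝ) * β) ((p.2 : ℝ) * β)).Nonempty) :
    ∃ l : ℤ, π (l * β) ∈ ⋃ p ∈ S, π '' Ico ((p.1 : ℝ) * β) ((p.2 : ℝ) * β) := by
  obtain ⟨x, hx⟩ := hne
  simp only [mem_iUnion, mem_image] at hx
  obtain ⟨p, hp, t, ht, -⟩ := hx
  exact ⟨p.1, mem_biUnion hp (mem_image_of_mem π (left_mem_Ico.2 (ht.1.trans_lt ht.2)))⟩

theorem invariant_step_function_constant_general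
    (β : ℝ)
    (f : AddCircle (1 : ℝ) → ℤ)
    (hlevel : ∀ n : ℤ, ∃ S : Finset (ℤ × ℤ),
      f ⁻¹' {n} = ⋃ p ∈ S,
        (fun t : ℝ => (t : AddCircle (1 : ℝ))) '' Set.Ico ((p.1 : ℝ) * β) ((p.2 : ℝ) * β))
    (hinv : ∀ x, f (x + (β : AddCircle (1 : ℝ))) = f x) :
    ∃ c : ℤ, ∀ x, f x = c := by
  have hper : Function.Periodic f (β : AddCircle (1 : ℝ)) := hinv
  refine ⟨f 0, fun x => ?_⟩
  obtain ⟨S, hS⟩ := hlevel (f x)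
  obtain ⟨l, hl⟩ := exists_intCast_mul_mem_biUnion_image_Ico (fun t : ℝ => (t : AddCircle (1 : ℝ)))
    β (S := ↑S) (hS ▸ ⟨x, rfl⟩)
  have hlx : ((l * β : ℝ) : AddCircle (1 : ℝ)) ∈ f ⁻¹' {f x} := hS ▸ hl
  calc f x = f ((l * β : ℝ) : AddCircle (1 : ℝ)) := hlx.symm
    _ = f (l • (β : AddCircle (1 : ℝ))) := by rw [← zsmul_eq_mul, AddCircle.coe_zsmul]
    _ = f 0 := hper.zsmul_eq l

/-- Let `α ∈ ℝ` be irrational and positive, `β = α/(1+α)`, and let `θ : ℝ/ℤ → ℝ/ℤ` be the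
rotation `x ↦ x + β`.  If `f : ℝ/ℤ → ℤ` takes finitely many values, each level set of `f`
is a finite union of half-open arcs `[lβ, mβ) mod 1` (`l, m ∈ ℤ`), and `f` is invariant
under `θ`, then `f` is constant. -/
theorem invariant_step_function_constant
    (α : ℝ) (hα : Irrational α) (hpos : 0 < α) (β : ℝ) (hβ : β = α / (1 + α))
    (f : AddCircle (1 : ℝ) → ℤ)
    (hfin : (Set.range f).Finite)
    (hlevel : ∀ n : ℤ, ∃ S : Finset (ℤ × ℤ),
      f ⁻¹' {n} = ⋃ p ∈ S,
        (fun t : ℝ => (t : AddCircle (1 : ℝ))) '' Set.Ico ((p.1 : ℝ) * β) ((p.2 : ℝ) * β))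
    (hinv : ∀ x, f (x + (β : AddCircle (1 : ℝ))) = f x) :
    ∃ c : ℤ, ∀ x, f x = c :=
  invariant_step_function_constant_general β f hlevel hinv
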